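/- Let (T, [···]) be a null symplectic triple system over a field of characteristic ≠ 2, 3. Then d_{x,x} d_{y,y} d_{x,x} = −d_{[xxy],[xxy]} for all x,y ∈ T. In particular, [[xxT][xxT]T] ⊆ [xxT] for every x ∈ T. -/

import Mathlib

/-!
Write `D = d_{x,x}` and `a = D y`. Since `D` is a derivation and the product is symmetric,
`D [y y w] = 2 [a y w] + [y y (D w)]`. Taking `y = x` first gives `[[xxx] x ·] = 0` and then
`D² = 0` (this is where `3` must be invertible). With `D² = 0`, applying `D` twice to `[y y z]`
yields `[a a z] + 2 [a y (D z)] = 0`, while applying it once to `[y y (D z)]` yields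
`D [y y (D z)] = 2 [a y (D z)]`; together, `D d_{y,y} D = -d_{a,a}`. The inclusion follows by
polarizing `d_{Du,Du}` in `u`.
-/

/-- A null symplectic triple system: a trilinear product which is symmetric in its
arguments and such that the maps `d_{x,y} = [xy·]` are derivations of the product. -/
def IsNullSTS (k : Type*) {T : Type*} [Field k] [AddCommGroup T] [Module k T]
    (tp : T →ₗ[k] T →ₗ[k] T →ₗ[k] T) : Prop :=
  (∀ x y z : T, tp x y z = tp y x z) ∧
  (∀ x y z : T, tp x y z = tp x z y) ∧
  (∀ x y u v w : T, tp x y (tp u v w) =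
      tp (tp x y u) v w + tp u (tp x y v) w + tp u v (tp x y w))

namespace IsNullSTS

variable {k T : Type*} [Field k] [AddCommGroup T] [Module k T]
  {tp : T →ₗ[k] T →ₗ[k] T →ₗ[k] T}

lemma rotate (h : IsNullSTS k tp) (u v w : T) : tp u v w = tp w u v := by
  rw [h.2.1, h.1]

lemma apply_tp_self (h : IsNullSTS k tp) (x y u w : T) :
    tp x y (tp u u w) = (2 : k) • tp (tp x y u) u w + tp u u (tp x y w) := by
  rw [h.2.2, h.1 u (tp x y u), two_smul]

lemma tp_add_add (h : IsNullSTS k tp) (a b w : T) :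
    tp (a + b) (a + b) w = tp a a w + (2 : k) • tp a b w + tp b b w := by
  simp only [map_add, LinearMap.add_apply, two_smul]
  rw [h.1 b a]
  abel

lemma tp_cube_self_eq_zero (h : IsNullSTS k tp) (h2 : (2 : k) ≠ 0) (x z : T) :
    tp (tp x x x) x z = 0 := by
  have hD := h.apply_tp_self x x x z
  rwa [right_eq_add, smul_eq_zero_iff_right h2] at hD

lemma tp_self_tp_self_eq_zero (h : IsNullSTS k tp) (h2 : (2 : k) ≠ 0) (h3 : (3 : k) ≠ 0)
    (x z : T) : tp x x (tp x x z) = 0 := by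
  have hD := h.2.2 x z x x x
  rw [h.rotate x z, h.tp_cube_self_eq_zero h2, h.2.1 x z x, h.rotate (tp x x z),
    h.2.1 x (tp x x z)] at hD
  refine (smul_eq_zero_iff_right h3).mp ?_
  rw [hD]
  module

lemma dxx_dyy_dxx_apply (h : IsNullSTS k tp) (h2 : (2 : k) ≠ 0) (h3 : (3 : k) ≠ 0)
    (x y z : T) : tp x x (tp y y (tp x x z)) = -tp (tp x x y) (tp x x y) z := by
  set a := tp x x y with ha
  have hDa : tp x x a = 0 := h.tp_self_tp_self_eq_zero h2 h3 x y
  have hD_yyDz : tp x x (tp y y (tp x x z)) = (2 : k) • tp a y (tp x x z) := by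
    rw [h.apply_tp_self, h.tp_self_tp_self_eq_zero h2 h3, map_zero, add_zero]
  have hD_ayz : tp x x (tp a y z) = tp a a z + tp a y (tp x x z) := by
    rw [h.2.2, hDa, map_zero, LinearMap.zero_apply, LinearMap.zero_apply, zero_add]
  have hDD_yyz : (2 : k) • (tp a a z + (2 : k) • tp a y (tp x x z)) = 0 := by
    have hDD := h.tp_self_tp_self_eq_zero h2 h3 x (tp y y z)
    rw [h.apply_tp_self x x y z, map_add, map_smul, ← ha, hD_ayz, hD_yyDz] at hDD
    rw [← hDD]
    module
  rw [hD_yyDz, eq_neg_iff_add_eq_zero, add_comm]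
  exact (smul_eq_zero_iff_right h2).mp hDD_yyz

lemma tp_tp_self_tp_self_mem_range (h : IsNullSTS k tp) (h2 : (2 : k) ≠ 0) (h3 : (3 : k) ≠ 0)
    (x u v w : T) : tp (tp x x u) (tp x x v) w ∈ LinearMap.range (tp x x) := by
  refine ⟨(2 : k)⁻¹ • (tp u u (tp x x w) + tp v v (tp x x w) - tp (u + v) (u + v) (tp x x w)),
    ?_⟩
  have hpol := h.tp_add_add (tp x x u) (tp x x v) w
  rw [← map_add] at hpol
  rw [map_smul, map_sub, map_add, h.dxx_dyy_dxx_apply h2 h3, h.dxx_dyy_dxx_apply h2 h3,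
    h.dxx_dyy_dxx_apply h2 h3, hpol, inv_smul_eq_iff₀ h2]
  module

end IsNullSTS

theorem nullSTS_dxx_dyy_dxx_general (k T : Type*) [Field k] [AddCommGroup T] [Module k T]
    (hchar2 : ringChar k ≠ 2) (hchar3 : ringChar k ≠ 3)
    (tp : T →ₗ[k] T →ₗ[k] T →ₗ[k] T) (hnsts : IsNullSTS k tp) :
    (∀ x y : T, tp x x ∘ₗ tp y y ∘ₗ tp x x = -(tp (tp x x y) (tp x x y))) ∧
    (∀ x u v w : T, tp (tp x x u) (tp x x v) w ∈ LinearMap.range (tp x x)) := by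
  have h2 : (2 : k) ≠ 0 := Ring.two_ne_zero hchar2
  have h3 : (3 : k) ≠ 0 := by
    exact_mod_cast mt (CharP.ringChar_of_prime_eq_zero Nat.prime_three) hchar3
  exact ⟨fun x y => LinearMap.ext (hnsts.dxx_dyy_dxx_apply h2 h3 x y),
    hnsts.tp_tp_self_tp_self_mem_range h2 h3⟩

/-- In a null symplectic triple system over a field of characteristic
`≠ 2, 3`, `d_{x,x} d_{y,y} d_{x,x} = -d_{[xxy],[xxy]}` for all `x, y`; in particular
`[[xxT][xxT]T] ⊆ [xxT]` for every `x`. -/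
theorem nullSTS_dxx_dyy_dxx (k T : Type*) [Field k] [AddCommGroup T] [Module k T]
    [FiniteDimensional k T] (hchar2 : ringChar k ≠ 2) (hchar3 : ringChar k ≠ 3)
    (tp : T →ₗ[k] T →ₗ[k] T →ₗ[k] T) (hnsts : IsNullSTS k tp) :
    (∀ x y : T, tp x x ∘ₗ tp y y ∘ₗ tp x x = -(tp (tp x x y) (tp x x y))) ∧
    (∀ x u v w : T, tp (tp x x u) (tp x x v) w ∈ LinearMap.range (tp x x)) :=
  nullSTS_dxx_dyy_dxx_general k T hchar2 hchar3 tp hnsts
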